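/- arXiv:1612.06086 — 3 statements merged into one kernel-verified Lean document; each statement's English description precedes it below -/
import Mathlib

section
/- If Γ : Ω × [0,1] → X is a map into a metric space X such that for almost every x ∈ Ω the curve t ↦ Γ(x,t) is a constant-speed geodesic from u(x) to v(x), and u, v ∈ L^p(Ω,X), then the curve t ↦ Γ(·,t) is a constant-speed geodesic in (L^p(Ω,X), d_{L^p}), i.e., d_{L^p}(Γ(·,s), Γ(·,t)) = |t − s| · d_{L^p}(u,v) for all s, t ∈ [0,1]. -/
open MeasureTheory

/-- If `Γ : Ω × [0,1] → X` is a.e. a fiberwise constant-speed geodesic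
from `u` to `v`, and `u, v ∈ L^p(Ω,X)`, then `t ↦ Γ(·,t)` is a constant-speed
geodesic in `(L^p(Ω,X), d_{L^p})`:
`d_{L^p}(Γ(·,s),Γ(·,t)) = |t - s| ⬝ d_{L^p}(u,v)` for all `s,t ∈ [0,1]`. -/
theorem geodesic_homotopy_is_Lp_geodesic
    {d : ℕ} {X : Type*} [MetricSpace X]
    (Ω : Set (EuclideanSpace ℝ (Fin d))) (hΩm : MeasurableSet Ω)
    (p : ℝ) (hp : 1 ≤ p)
    (u v : EuclideanSpace ℝ (Fin d) → X)
    (Γ : EuclideanSpace ℝ (Fin d) → ℝ → X)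
    (hint : IntegrableOn (fun x => dist (u x) (v x) ^ p) Ω volume)
    (hgeo : ∀ᵐ x ∂(volume.restrict Ω),
      Γ x 0 = u x ∧ Γ x 1 = v x ∧
      ∀ s ∈ Set.Icc (0:ℝ) 1, ∀ t ∈ Set.Icc (0:ℝ) 1,
        dist (Γ x s) (Γ x t) = |t - s| * dist (u x) (v x)) :
    ∀ s ∈ Set.Icc (0:ℝ) 1, ∀ t ∈ Set.Icc (0:ℝ) 1,
      (∫ x in Ω, dist (Γ x s) (Γ x t) ^ p) ^ (1 / p)
        = |t - s| * (∫ x in Ω, dist (u x) (v x) ^ p) ^ (1 / p) := by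
  intro s hs t ht
  have hp0 : p ≠ 0 := by linarith
  have hc : (0:ℝ) ≤ |t - s| := abs_nonneg _
  have h1 : ∫ x in Ω, dist (Γ x s) (Γ x t) ^ p
      = |t - s| ^ p * ∫ x in Ω, dist (u x) (v x) ^ p := by
    rw [← integral_const_mul]
    refine integral_congr_ae ?_
    filter_upwards [hgeo] with x hx
    rw [hx.2.2 s hs t ht, Real.mul_rpow hc dist_nonneg]
  have hI : (0:ℝ) ≤ ∫ x in Ω, dist (u x) (v x) ^ p :=
    integral_nonneg fun x => Real.rpow_nonneg dist_nonneg p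
  rw [h1, Real.mul_rpow (Real.rpow_nonneg hc p) hI,
    ← Real.rpow_mul hc, mul_one_div, div_self hp0, Real.rpow_one]
end

section
/- (Interpolation step of Lemma 2.12) Let 2 < q < r ≤ ∞, h > 0, m > 0, and let a, b, c ≥ 0 be given with a ≤ C₁ h^m. Define μ = (1/2 − 1/q)/(1/q − 1/r) and δ = (m − d(1/2−1/q))/(1+μ), and assume δ > 0. If a measurable vector-valued function V on Ω satisfies ‖V‖_{L^q} ≤ ‖V‖_{L^2}^{1−s}‖V‖_{L^r}^{s} with s = μ/(1+μ) (L^p interpolation), ‖V‖_{L^2} ≤ C₁ h^m, and ‖V‖_{L^r} ≤ C₂ h^{−d(1/q−1/r)}‖V‖_{L^q} + C₃, then ‖V‖_{L^q} ≤ C h^δ with C depending only on C₁, C₂, C₃, m, d, q, r. -/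
/-!
Write `s = μ / (1 + μ)`. Raising the inverse estimate `‖V‖_r ≤ K ‖V‖_q + C₃` to the power `s`
and inserting it into the interpolation inequality gives
`‖V‖_q ≤ (‖V‖_2 K^μ)^(1-s) ‖V‖_q^s + ‖V‖_2^(1-s) C₃^s`. Young's inequality
`a^(1-s) y^s ≤ (1-s) a + s y` absorbs the `‖V‖_q^s` term, leaving
`‖V‖_q ≤ ‖V‖_2 K^μ + ‖V‖_2^(1-s) C₃^s / (1-s)`. With `‖V‖_2 ≲ h^m` and `K ≲ h^(-d(1/q-1/r))`
the two terms are of order `h^(m - d(1/2-1/q)) = h^((1+μ)δ)` and `h^(m/(1+μ))`, both at most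
`h^δ` for `h ≤ 1`.
-/

open Real

theorem le_add_div_of_le_rpow_mul_rpow_add {a b y s : ℝ} (ha : 0 ≤ a) (hy : 0 ≤ y)
    (hs0 : 0 ≤ s) (hs1 : s < 1) (h : y ≤ a ^ (1 - s) * y ^ s + b) :
    y ≤ a + b / (1 - s) := by
  have young : a ^ (1 - s) * y ^ s ≤ (1 - s) * a + s * y :=
    geom_mean_le_arith_mean2_weighted (by linarith) hs0 ha hy (by ring)
  rw [← sub_le_iff_le_add', le_div_iff₀ (by linarith)]
  nlinarith

theorem le_of_interpolation_of_inverse_estimate {s K c V2 Vq Vr : ℝ}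
    (hs0 : 0 ≤ s) (hs1 : s < 1) (hK : 0 ≤ K) (hc : 0 ≤ c)
    (hV2 : 0 ≤ V2) (hVq : 0 ≤ Vq) (hVr : 0 ≤ Vr)
    (hinterp : Vq ≤ V2 ^ (1 - s) * Vr ^ s) (hinv : Vr ≤ K * Vq + c) :
    Vq ≤ V2 * K ^ (s / (1 - s)) + V2 ^ (1 - s) * c ^ s / (1 - s) := by
  have hs1' : 0 < 1 - s := by linarith
  have hVr_pow : Vr ^ s ≤ K ^ s * Vq ^ s + c ^ s := by
    calc Vr ^ s ≤ (K * Vq + c) ^ s := rpow_le_rpow hVr hinv hs0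
      _ ≤ (K * Vq) ^ s + c ^ s := rpow_add_le_add_rpow (by positivity) hc hs0 hs1.le
      _ = K ^ s * Vq ^ s + c ^ s := by rw [mul_rpow hK hVq]
  have hbase : (V2 * K ^ (s / (1 - s))) ^ (1 - s) = V2 ^ (1 - s) * K ^ s := by
    rw [mul_rpow hV2 (by positivity), ← rpow_mul hK, div_mul_cancel₀ _ hs1'.ne']
  refine le_add_div_of_le_rpow_mul_rpow_add (by positivity) hVq hs0 hs1 ?_
  calc Vq ≤ V2 ^ (1 - s) * (K ^ s * Vq ^ s + c ^ s) :=
        hinterp.trans (mul_le_mul_of_nonneg_left hVr_pow (by positivity))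
    _ = (V2 * K ^ (s / (1 - s))) ^ (1 - s) * Vq ^ s + V2 ^ (1 - s) * c ^ s := by
        rw [hbase]; ring

theorem le_mul_rpow_of_interpolation_of_inverse_estimate
    {μ e m δ C₁ C₂ C₃ h V2 Vq Vr : ℝ} (hμ : 0 ≤ μ) (hδe : δ ≤ m + e * μ) (hδm : δ * (1 + μ) ≤ m)
    (hC₁ : 0 ≤ C₁) (hC₂ : 0 ≤ C₂) (hC₃ : 0 ≤ C₃) (hh0 : 0 < h) (hh1 : h ≤ 1)
    (hV2 : 0 ≤ V2) (hVq : 0 ≤ Vq) (hVr : 0 ≤ Vr)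
    (hinterp : Vq ≤ V2 ^ (1 - μ / (1 + μ)) * Vr ^ (μ / (1 + μ))) (hL2 : V2 ≤ C₁ * h ^ m)
    (hinv : Vr ≤ C₂ * h ^ e * Vq + C₃) :
    Vq ≤ (C₁ * C₂ ^ μ + (1 + μ) * C₁ ^ (1 - μ / (1 + μ)) * C₃ ^ (μ / (1 + μ))) * h ^ δ := by
  set s := μ / (1 + μ) with hs
  have hs0 : 0 ≤ s := by positivity
  have hs1 : s < 1 := (div_lt_one (by linarith)).2 (by linarith)
  have hcompl : 1 - s = (1 + μ)⁻¹ := by rw [hs]; field_simp; ring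
  have hsμ : s / (1 - s) = μ := by rw [hcompl, hs]; field_simp
  have hδm' : δ ≤ m * (1 - s) := by
    rw [hcompl, ← div_eq_mul_inv, le_div_iff₀ (by linarith)]; exact hδm
  have hlead : V2 * (C₂ * h ^ e) ^ μ ≤ C₁ * C₂ ^ μ * h ^ δ := by
    calc V2 * (C₂ * h ^ e) ^ μ ≤ C₁ * h ^ m * (C₂ ^ μ * h ^ (e * μ)) := by
          rw [mul_rpow hC₂ (by positivity), ← rpow_mul hh0.le]
          exact mul_le_mul_of_nonneg_right hL2 (by positivity)
      _ = C₁ * C₂ ^ μ * h ^ (m + e * μ) := by rw [rpow_add hh0]; ring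
      _ ≤ C₁ * C₂ ^ μ * h ^ δ :=
          mul_le_mul_of_nonneg_left (rpow_le_rpow_of_exponent_ge hh0 hh1 hδe) (by positivity)
  have hrest : V2 ^ (1 - s) * C₃ ^ s ≤ C₁ ^ (1 - s) * C₃ ^ s * h ^ δ := by
    calc V2 ^ (1 - s) * C₃ ^ s ≤ (C₁ * h ^ m) ^ (1 - s) * C₃ ^ s := by gcongr
      _ = C₁ ^ (1 - s) * C₃ ^ s * h ^ (m * (1 - s)) := by
          rw [mul_rpow hC₁ (by positivity), ← rpow_mul hh0.le]; ring
      _ ≤ C₁ ^ (1 - s) * C₃ ^ s * h ^ δ :=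
          mul_le_mul_of_nonneg_left (rpow_le_rpow_of_exponent_ge hh0 hh1 hδm') (by positivity)
  calc Vq ≤ V2 * (C₂ * h ^ e) ^ (s / (1 - s)) + V2 ^ (1 - s) * C₃ ^ s / (1 - s) :=
        le_of_interpolation_of_inverse_estimate hs0 hs1 (by positivity) hC₃ hV2 hVq hVr
          hinterp hinv
    _ ≤ C₁ * C₂ ^ μ * h ^ δ + C₁ ^ (1 - s) * C₃ ^ s * h ^ δ / (1 - s) := by rw [hsμ]; gcongr
    _ = _ := by rw [hcompl, div_inv_eq_mul]; ring

theorem interpolation_step_general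
    (d : ℕ) (q rinv m : ℝ)
    (hq2 : 2 < q) (hrq : rinv < 1 / q) :
    ∀ μ s δ : ℝ,
      μ = (1 / 2 - 1 / q) / (1 / q - rinv) →
      s = μ / (1 + μ) →
      δ = (m - (d : ℝ) * (1 / 2 - 1 / q)) / (1 + μ) →
      0 < δ →
    ∀ C₁ C₂ C₃ : ℝ, 0 ≤ C₁ → 0 ≤ C₂ → 0 ≤ C₃ →
    ∃ C > (0:ℝ), ∀ h V2 Vq Vr : ℝ,
      0 < h → h ≤ 1 →
      0 ≤ V2 → 0 ≤ Vq → 0 ≤ Vr →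
      Vq ≤ V2 ^ (1 - s) * Vr ^ s →
      V2 ≤ C₁ * h ^ m →
      Vr ≤ C₂ * h ^ (-(d : ℝ) * (1 / q - rinv)) * Vq + C₃ →
      Vq ≤ C * h ^ δ := by
  intro μ s δ hμ hs hδ hδ0 C₁ C₂ C₃ hC₁ hC₂ hC₃
  subst hs
  have hgap : 0 < 1 / 2 - 1 / q := by
    have : 1 / q < 1 / 2 := one_div_lt_one_div_of_lt two_pos hq2
    linarith
  have hμ0 : 0 < μ := hμ ▸ div_pos hgap (by linarith)
  have hloss : (d : ℝ) * (1 / q - rinv) * μ = d * (1 / 2 - 1 / q) := by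
    rw [hμ, mul_assoc, mul_div_cancel₀ _ (by linarith)]
  have hδμ : δ * (1 + μ) = m - d * (1 / 2 - 1 / q) := by rw [hδ]; field_simp
  have hδe : δ ≤ m + -(d : ℝ) * (1 / q - rinv) * μ := by
    rw [neg_mul, neg_mul, hloss]
    nlinarith
  have hδm : δ * (1 + μ) ≤ m := by
    have : 0 ≤ (d : ℝ) * (1 / 2 - 1 / q) := by positivity
    linarith
  refine ⟨C₁ * C₂ ^ μ + (1 + μ) * C₁ ^ (1 - μ / (1 + μ)) * C₃ ^ (μ / (1 + μ)) + 1,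
    by positivity, ?_⟩
  intro h V2 Vq Vr hh0 hh1 hV2 hVq hVr hinterp hL2 hinv
  calc Vq ≤ (C₁ * C₂ ^ μ + (1 + μ) * C₁ ^ (1 - μ / (1 + μ)) * C₃ ^ (μ / (1 + μ))) * h ^ δ :=
        le_mul_rpow_of_interpolation_of_inverse_estimate hμ0.le hδe hδm hC₁ hC₂ hC₃ hh0 hh1
          hV2 hVq hVr hinterp hL2 hinv
    _ ≤ _ := mul_le_mul_of_nonneg_right (by linarith) (by positivity)

/-- interpolation step of Lemma 2.12: combining an `L²` bound of
order `h^m`, an inverse estimate with loss `h^{-d(1/q-1/r)}`, and `L^p`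
interpolation `‖V‖_q ≤ ‖V‖_2^{1-s} ‖V‖_r^s`, one gets `‖V‖_q ≤ C h^δ` with `C`
depending only on the data `C₁, C₂, C₃, m, d, q, r`. -/
theorem interpolation_step
    (d : ℕ) (q rinv m : ℝ)
    (hq2 : 2 < q) (hrinv0 : 0 ≤ rinv) (hrq : rinv < 1 / q) (hm : 0 < m) :
    ∀ μ s δ : ℝ,
      μ = (1 / 2 - 1 / q) / (1 / q - rinv) →
      s = μ / (1 + μ) →
      δ = (m - (d : ℝ) * (1 / 2 - 1 / q)) / (1 + μ) →
      0 < δ →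
    ∀ C₁ C₂ C₃ : ℝ, 0 ≤ C₁ → 0 ≤ C₂ → 0 ≤ C₃ →
    ∃ C > (0:ℝ), ∀ h V2 Vq Vr : ℝ,
      0 < h → h ≤ 1 →
      0 ≤ V2 → 0 ≤ Vq → 0 ≤ Vr →
      Vq ≤ V2 ^ (1 - s) * Vr ^ s →
      V2 ≤ C₁ * h ^ m →
      Vr ≤ C₂ * h ^ (-(d : ℝ) * (1 / q - rinv)) * Vq + C₃ →
      Vq ≤ C * h ^ δ :=
  interpolation_step_general d q rinv m hq2 hrq
end

section
/- (Well-posedness/localization of geodesic interpolation values) Let M be a complete Riemannian manifold, v₁,…,v_l ∈ M with d(vᵢ,v₁) ≤ ρ for all i, and let λ₁,…,λ_l : T → ℝ be continuous functions with Σᵢ λᵢ(x) = 1 for all x ∈ T, T compact. Then for every x ∈ T the set of minimizers of q ↦ Σᵢ λᵢ(x) d(vᵢ,q)² over M is nonempty, and every minimizer lies in the ball B_{Cρ}(v₁) with C ≤ 6 l maxᵢ ‖λᵢ‖_∞. -/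
/-- well-posedness/localization of geodesic interpolation values:
in a proper (e.g. complete Riemannian) metric space, for nodal values `vᵢ` with
`d(vᵢ, v₀) ≤ ρ` and continuous weights `λᵢ : T → ℝ` summing to 1 on the compact
set `T`, the weighted squared-distance functional has a minimizer for each
`x ∈ T`, and every minimizer lies in the ball of radius `6 l Λ ρ` around `v₀`,
where `Λ ≥ maxᵢ ‖λᵢ‖_∞`. -/
theorem geodesic_interpolation_wellposed
    {M : Type*} [MetricSpace M] [ProperSpace M]
    {T : Type*} [TopologicalSpace T] [CompactSpace T]
    (l : ℕ) (hl : 0 < l) (v : Fin l → M) (ρ : ℝ) (hρ : 0 ≤ ρ)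
    (hv : ∀ i, dist (v i) (v ⟨0, hl⟩) ≤ ρ)
    (lam : Fin l → T → ℝ) (hcont : ∀ i, Continuous (lam i))
    (hsum : ∀ x : T, ∑ i, lam i x = 1)
    (Λ : ℝ) (hΛ : ∀ i x, |lam i x| ≤ Λ) :
    ∀ x : T,
      (∃ q : M, ∀ q' : M,
        ∑ i, lam i x * dist (v i) q ^ 2 ≤ ∑ i, lam i x * dist (v i) q' ^ 2) ∧
      (∀ q : M,
        (∀ q' : M, ∑ i, lam i x * dist (v i) q ^ 2 ≤ ∑ i, lam i x * dist (v i) q' ^ 2) →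
        q ∈ Metric.closedBall (v ⟨0, hl⟩) (6 * l * Λ * ρ)) := by
  intro x
  set v0 : M := v ⟨0, hl⟩ with hv0
  set f : M → ℝ := fun q => ∑ i, lam i x * dist (v i) q ^ 2 with hf
  set a : ℝ := (l : ℝ) * Λ with ha
  have hΛ0 : 0 ≤ Λ := le_trans (abs_nonneg _) (hΛ ⟨0, hl⟩ x)
  have ha1 : 1 ≤ a := by
    calc (1 : ℝ) = ∑ i, lam i x := (hsum x).symm
      _ ≤ ∑ i : Fin l, Λ := Finset.sum_le_sum fun i _ =>
          le_trans (le_abs_self _) (hΛ i x)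
      _ = a := by simp [ha, mul_comm]
  have ha0 : 0 ≤ a := by linarith
  -- upper bound at v0
  have hfv0 : f v0 ≤ a * ρ ^ 2 := by
    have : f v0 ≤ ∑ i : Fin l, Λ * ρ ^ 2 := by
      apply Finset.sum_le_sum
      intro i _
      have h1 : lam i x * dist (v i) v0 ^ 2 ≤ |lam i x| * dist (v i) v0 ^ 2 :=
        mul_le_mul_of_nonneg_right (le_abs_self _) (sq_nonneg _)
      have h2 : |lam i x| * dist (v i) v0 ^ 2 ≤ Λ * ρ ^ 2 := by
        apply mul_le_mul (hΛ i x) _ (sq_nonneg _) hΛ0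
        exact pow_le_pow_left₀ dist_nonneg (hv i) 2
      linarith
    calc f v0 ≤ ∑ i : Fin l, Λ * ρ ^ 2 := this
      _ = a * ρ ^ 2 := by simp [ha]; ring
  -- lower (coercivity) bound
  have hlow : ∀ q : M, dist v0 q ^ 2 ≤ f q + 2 * a * ρ * dist v0 q + a * ρ ^ 2 := by
    intro q
    set d0 : ℝ := dist v0 q with hd0
    have hd0nn : 0 ≤ d0 := dist_nonneg
    have hsum1 : ∑ i, lam i x * d0 ^ 2 = d0 ^ 2 := by
      rw [← Finset.sum_mul, hsum x, one_mul]
    have hper : ∀ i : Fin l,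
        lam i x * d0 ^ 2 ≤ lam i x * dist (v i) q ^ 2 + Λ * (ρ * (2 * d0 + ρ)) := by
      intro i
      set di : ℝ := dist (v i) q with hdi
      have hdiff : |d0 - di| ≤ ρ := by
        have := abs_dist_sub_le v0 (v i) q
        have hvd : dist v0 (v i) ≤ ρ := by rw [dist_comm]; exact hv i
        calc |d0 - di| ≤ dist v0 (v i) := this
          _ ≤ ρ := hvd
      have hdile : di ≤ d0 + ρ := by
        have := abs_le.mp hdiff
        linarith [this.1]
      have hdinn : 0 ≤ di := dist_nonneg
      have habs2 : |d0 ^ 2 - di ^ 2| ≤ ρ * (2 * d0 + ρ) := by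
        have h1 : d0 ^ 2 - di ^ 2 = (d0 - di) * (d0 + di) := by ring
        rw [h1, abs_mul]
        have h2 : |d0 + di| = d0 + di := abs_of_nonneg (by linarith)
        rw [h2]
        apply mul_le_mul hdiff (by linarith) (by linarith) hρ
      have h3 : lam i x * (d0 ^ 2 - di ^ 2) ≤ Λ * (ρ * (2 * d0 + ρ)) := by
        calc lam i x * (d0 ^ 2 - di ^ 2) ≤ |lam i x * (d0 ^ 2 - di ^ 2)| := le_abs_self _
          _ = |lam i x| * |d0 ^ 2 - di ^ 2| := abs_mul _ _
          _ ≤ Λ * (ρ * (2 * d0 + ρ)) := by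
              apply mul_le_mul (hΛ i x) habs2 (abs_nonneg _) hΛ0
      linarith
    have hsumle : ∑ i, lam i x * d0 ^ 2 ≤
        ∑ i, (lam i x * dist (v i) q ^ 2 + Λ * (ρ * (2 * d0 + ρ))) :=
      Finset.sum_le_sum fun i _ => hper i
    rw [Finset.sum_add_distrib, Finset.sum_const, Finset.card_univ] at hsumle
    simp only [Fintype.card_fin, nsmul_eq_mul] at hsumle
    rw [hsum1] at hsumle
    have hfeq : f q = ∑ i, lam i x * dist (v i) q ^ 2 := rfl
    have hring : (l : ℝ) * (Λ * (ρ * (2 * d0 + ρ))) = 2 * a * ρ * d0 + a * ρ ^ 2 := by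
      rw [ha]; ring
    linarith [hsumle]
  constructor
  · -- existence
    have hcf : Continuous f := by
      apply continuous_finset_sum
      intro i _
      exact continuous_const.mul ((continuous_const.dist continuous_id).pow 2)
    have hne : (Metric.closedBall v0 (6 * a * ρ)).Nonempty :=
      ⟨v0, Metric.mem_closedBall_self (by nlinarith)⟩
    obtain ⟨q₀, hq₀mem, hq₀min⟩ :=
      (isCompact_closedBall v0 (6 * a * ρ)).exists_isMinOn hne hcf.continuousOn
    refine ⟨q₀, fun q' => ?_⟩
    by_cases hq' : q' ∈ Metric.closedBall v0 (6 * a * ρ)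
    · exact hq₀min hq'
    · have hd' : 6 * a * ρ < dist q' v0 := by
        simpa [Metric.mem_closedBall] using hq'
      have hd'' : 6 * a * ρ < dist v0 q' := by rwa [dist_comm]
      have h1 : a * ρ ^ 2 ≤ f q' := by
        have hlq := hlow q'
        set d : ℝ := dist v0 q' with hd
        have hb : 0 ≤ a * ρ := mul_nonneg ha0 hρ
        have hdge : 6 * (a * ρ) ≤ d := by linarith
        have p4 : a * ρ ^ 2 ≤ (a * ρ) * (a * ρ) := by nlinarith [sq_nonneg ρ]
        nlinarith [mul_nonneg (by linarith : (0:ℝ) ≤ d - 6 * (a * ρ)) (by linarith : (0:ℝ) ≤ d - 2 * (a * ρ)),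
          mul_nonneg hb (by linarith : (0:ℝ) ≤ d - 6 * (a * ρ)), mul_nonneg hb hb]
      have h2 : f q₀ ≤ f v0 := hq₀min (Metric.mem_closedBall_self (by nlinarith))
      show f q₀ ≤ f q'
      linarith
  · -- localization
    intro q hq
    have hfq : f q ≤ a * ρ ^ 2 := le_trans (hq v0) hfv0
    have := hlow q
    have hdnn : 0 ≤ dist v0 q := dist_nonneg
    have hkey : dist v0 q ≤ 6 * a * ρ := by
      by_contra hcon
      push_neg at hcon
      set d : ℝ := dist v0 q with hd
      have hb : 0 ≤ a * ρ := mul_nonneg ha0 hρ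
      have hdgt : 6 * (a * ρ) < d := by linarith
      have p4 : a * ρ ^ 2 ≤ (a * ρ) * (a * ρ) := by nlinarith [sq_nonneg ρ]
      nlinarith [mul_pos (by linarith : (0:ℝ) < d - 6 * (a * ρ)) (by linarith : (0:ℝ) < d - 6 * (a * ρ)),
        mul_nonneg hb (by linarith : (0:ℝ) ≤ d - 6 * (a * ρ)), mul_nonneg hb hb]
    rw [Metric.mem_closedBall, dist_comm]
    calc dist v0 q ≤ 6 * a * ρ := hkey
      _ = 6 * l * Λ * ρ := by rw [ha]; ring
end
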